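/- arXiv:1601.07695 — 3 statements merged into one kernel-verified Lean document; each statement's English description precedes it below -/
import Mathlib

section
/- For any real 3×3 symmetric traceless matrix Q, and any ε > 0, one has trace(Q³) ≤ (3ε/8)·(trace(Q²))² + (3/(2ε))·trace(Q²). -/
/-!
Diagonalising `Q` turns the traces into power sums of the eigenvalues `a, b, c`, which add up
to `0`. For such numbers `(a³ + b³ + c³)² ≤ (a² + b² + c²)³ / 6`, and by AM-GM the right-hand
side of the claim is at least `(3 / 2) (a² + b² + c²)^(3/2)`, uniformly in `ε`.
-/

open Matrix

theorem Matrix.IsHermitian.trace_pow_eq_sum_eigenvalues_pow {n 𝕜 : Type*} [Fintype n]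
    [DecidableEq n] [RCLike 𝕜] {A : Matrix n n 𝕜} (hA : A.IsHermitian) (k : ℕ) :
    (A ^ k).trace = ∑ i, (hA.eigenvalues i : 𝕜) ^ k := by
  conv_lhs => rw [hA.spectral_theorem]
  rw [← map_pow, diagonal_pow, Unitary.conjStarAlgAut_apply, trace_mul_cycle,
    Unitary.coe_star_mul_self, one_mul, trace_diagonal]
  simp

-- With `c = -(a + b)` the gap is `2 (a - b)² (a + 2b)² (2a + b)²`.
theorem sq_sum_cubes_le_of_add_eq_zero {a b c : ℝ} (h : a + b + c = 0) :
    6 * (a ^ 3 + b ^ 3 + c ^ 3) ^ 2 ≤ (a ^ 2 + b ^ 2 + c ^ 2) ^ 3 := by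
  obtain rfl : c = -(a + b) := by linarith
  nlinarith [sq_nonneg ((a - b) * (a + 2 * b) * (2 * a + b))]

theorem le_add_of_sq_le_four_mul {t x y : ℝ} (hx : 0 ≤ x) (hy : 0 ≤ y) (h : t ^ 2 ≤ 4 * x * y) :
    t ≤ x + y :=
  le_of_sq_le_sq (by nlinarith [sq_nonneg (x - y)]) (add_nonneg hx hy)

theorem sum_cubes_le_of_add_eq_zero {a b c : ℝ} (h : a + b + c = 0) {ε : ℝ} (hε : 0 < ε) :
    a ^ 3 + b ^ 3 + c ^ 3 ≤
      3 * ε / 8 * (a ^ 2 + b ^ 2 + c ^ 2) ^ 2 + 3 / (2 * ε) * (a ^ 2 + b ^ 2 + c ^ 2) := by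
  set s := a ^ 2 + b ^ 2 + c ^ 2
  have hs : 0 ≤ s := by positivity
  have hprod : 4 * (3 * ε / 8 * s ^ 2) * (3 / (2 * ε) * s) = 9 / 4 * s ^ 3 := by
    field_simp
    ring
  refine le_add_of_sq_le_four_mul (by positivity) (by positivity) ?_
  rw [hprod]
  nlinarith [sq_sum_cubes_le_of_add_eq_zero h, pow_nonneg hs 3]

theorem trace_cube_le (Q : Matrix (Fin 3) (Fin 3) ℝ) (hsymm : Q.IsSymm)
    (htr : Q.trace = 0) (ε : ℝ) (hε : 0 < ε) :
    (Q ^ 3).trace ≤ 3 * ε / 8 * ((Q ^ 2).trace) ^ 2 + 3 / (2 * ε) * (Q ^ 2).trace := by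
  have hQ : Q.IsHermitian := isHermitian_iff_isSymm.mpr hsymm
  have hsum : hQ.eigenvalues 0 + hQ.eigenvalues 1 + hQ.eigenvalues 2 = 0 := by
    simpa [hQ.trace_eq_sum_eigenvalues, Fin.sum_univ_three] using htr
  simp only [hQ.trace_pow_eq_sum_eigenvalues_pow, Fin.sum_univ_three, RCLike.ofReal_real_eq_id,
    id]
  exact sum_cubes_le_of_add_eq_zero hsum hε
end

section
/- Assume a > 0, c > 0, and ac ≥ (9/16)b². Then with ε := 8c/(3|b|) (for b ≠ 0), one has |b|·(3ε/8) − c ≤ 0 and |b|·(3/(2ε)) − a ≤ −(a − 9b²/(16c)) where a − 9b²/(16c) ≥ 0. In particular, for every real 3×3 symmetric traceless matrix Q, −a·trace(Q²) + b·trace(Q³) − c·(trace(Q²))² ≤ −(a − 9b²/(16c))·trace(Q²). -/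
/-! For every real symmetric `Q`, `tr(Q³)` is the Frobenius inner product of `Q` and `Q²`, so
Cauchy–Schwarz and submultiplicativity of the Frobenius norm give `tr(Q³)² ≤ tr(Q²)³`. With
`s = tr(Q²)`, `t = tr(Q³)` and `K = 9b²/(16c)` the matrix inequality becomes `b t ≤ c s² + K s`,
which follows from `(b t)² ≤ b² s³ ≤ (c s² + K s)²` since `b² ≤ 4cK`. -/

namespace Matrix

variable {l m n : Type*} [Fintype l] [Fintype m] [Fintype n]

theorem trace_transpose_mul_eq_sum (A B : Matrix m n ℝ) :
    (Aᵀ * B).trace = ∑ i, ∑ j, A i j * B i j := by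
  simp only [trace, diag, mul_apply, transpose_apply]
  exact Finset.sum_comm

theorem sq_trace_transpose_mul_le (A B : Matrix m n ℝ) :
    (Aᵀ * B).trace ^ 2 ≤ (Aᵀ * A).trace * (Bᵀ * B).trace := by
  simp only [trace_transpose_mul_eq_sum, ← Fintype.sum_prod_type', ← sq]
  exact Finset.sum_mul_sq_le_sq_mul_sq _ _ _

theorem trace_transpose_mul_self_nonneg (A : Matrix m n ℝ) : 0 ≤ (Aᵀ * A).trace := by
  rw [trace_transpose_mul_eq_sum]
  exact Finset.sum_nonneg fun i _ => Finset.sum_nonneg fun j _ => mul_self_nonneg _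

theorem trace_transpose_mul_self_mul_le (A : Matrix l m ℝ) (B : Matrix m n ℝ) :
    ((A * B)ᵀ * (A * B)).trace ≤ (Aᵀ * A).trace * (Bᵀ * B).trace := by
  simp only [trace_transpose_mul_eq_sum, ← sq]
  calc ∑ i, ∑ j, (A * B) i j ^ 2
      ≤ ∑ i, ∑ j, (∑ k, A i k ^ 2) * ∑ k, B k j ^ 2 :=
        Finset.sum_le_sum fun i _ => Finset.sum_le_sum fun j _ =>
          Finset.sum_mul_sq_le_sq_mul_sq _ _ _
    _ = (∑ i, ∑ k, A i k ^ 2) * ∑ k, ∑ j, B k j ^ 2 := by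
        rw [Finset.sum_comm (f := fun k j => B k j ^ 2), Finset.sum_mul_sum]

theorem IsSymm.sq_trace_pow_three_le [DecidableEq n] {Q : Matrix n n ℝ} (hQ : Q.IsSymm) :
    (Q ^ 3).trace ^ 2 ≤ (Q ^ 2).trace ^ 3 := by
  have h2 : Q ^ 2 = Qᵀ * Q := by rw [hQ.eq, sq]
  have h3 : Q ^ 3 = Qᵀ * (Q * Q) := by rw [hQ.eq, pow_succ', sq]
  rw [h2, h3]
  have hs := trace_transpose_mul_self_nonneg Q
  calc (Qᵀ * (Q * Q)).trace ^ 2 ≤ (Qᵀ * Q).trace * ((Q * Q)ᵀ * (Q * Q)).trace :=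
        sq_trace_transpose_mul_le _ _
    _ ≤ (Qᵀ * Q).trace * ((Qᵀ * Q).trace * (Qᵀ * Q).trace) := by
        gcongr
        simpa [hQ.eq] using trace_transpose_mul_self_mul_le Q Q
    _ = (Qᵀ * Q).trace ^ 3 := by ring

end Matrix

theorem mul_le_of_sq_le_cube {b c K s t : ℝ} (hc : 0 ≤ c) (hK : 0 ≤ K) (hbK : b ^ 2 ≤ 4 * c * K)
    (hts : t ^ 2 ≤ s ^ 3) : b * t ≤ c * s ^ 2 + K * s := by
  have hs : 0 ≤ s := (Odd.pow_nonneg_iff (by decide)).1 ((sq_nonneg t).trans hts)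
  have hX : 0 ≤ c * s ^ 2 + K * s := by positivity
  refine le_trans (le_abs_self _) (abs_le_of_sq_le_sq ?_ hX)
  -- (c s² + K s)² - b² s³ = (c s² - K s)² + (4cK - b²) s³
  nlinarith [sq_nonneg (c * s ^ 2 - K * s), mul_le_mul_of_nonneg_left hts (sq_nonneg b),
    mul_le_mul_of_nonneg_right hbK (pow_nonneg hs 3)]

theorem damping_coefficients_general (a b c : ℝ) (hc : 0 < c)
    (habc : a * c ≥ 9 / 16 * b ^ 2) :
    |b| * (3 * (8 * c / (3 * |b|)) / 8) - c ≤ 0 ∧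
    |b| * (3 / (2 * (8 * c / (3 * |b|)))) - a ≤ -(a - 9 * b ^ 2 / (16 * c)) ∧
    0 ≤ a - 9 * b ^ 2 / (16 * c) ∧
    ∀ Q : Matrix (Fin 3) (Fin 3) ℝ, Q.IsSymm → Q.trace = 0 →
      -a * (Q ^ 2).trace + b * (Q ^ 3).trace - c * ((Q ^ 2).trace) ^ 2 ≤
        -(a - 9 * b ^ 2 / (16 * c)) * (Q ^ 2).trace := by
  have hε : |b| * (3 * (8 * c / (3 * |b|)) / 8) = c * (|b| / |b|) := by ring
  have hε' : |b| * (3 / (2 * (8 * c / (3 * |b|)))) = 9 * b ^ 2 / (16 * c) := by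
    rw [← sq_abs b]; simp only [div_eq_mul_inv, mul_inv, inv_inv]; ring
  refine ⟨?_, ?_, ?_, fun Q hQ _ => ?_⟩
  · rw [hε, sub_nonpos]
    exact mul_le_of_le_one_right hc.le (div_self_le_one _)
  · rw [hε']; linarith
  · rw [sub_nonneg, div_le_iff₀ (by positivity)]
    linarith
  · have hbK : b ^ 2 ≤ 4 * c * (9 * b ^ 2 / (16 * c)) := by
      rw [mul_div_assoc', le_div_iff₀ (by positivity)]
      nlinarith [sq_nonneg b]
    have hbt := mul_le_of_sq_le_cube hc.le (by positivity) hbK hQ.sq_trace_pow_three_le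
    linear_combination hbt

theorem damping_coefficients (a b c : ℝ) (ha : 0 < a) (hc : 0 < c)
    (habc : a * c ≥ 9 / 16 * b ^ 2) (hb : b ≠ 0) :
    |b| * (3 * (8 * c / (3 * |b|)) / 8) - c ≤ 0 ∧
    |b| * (3 / (2 * (8 * c / (3 * |b|)))) - a ≤ -(a - 9 * b ^ 2 / (16 * c)) ∧
    0 ≤ a - 9 * b ^ 2 / (16 * c) ∧
    ∀ Q : Matrix (Fin 3) (Fin 3) ℝ, Q.IsSymm → Q.trace = 0 →
      -a * (Q ^ 2).trace + b * (Q ^ 3).trace - c * ((Q ^ 2).trace) ^ 2 ≤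
        -(a - 9 * b ^ 2 / (16 * c)) * (Q ^ 2).trace :=
  damping_coefficients_general a b c hc habc
end

section
/- Let f : [0, ∞) → ℝ be nonnegative. If f satisfies f(t) ≤ C(H₀ + H₀² + H₀^{5/2} + (1 + H₀⁵) f(t)²) for all t, f is continuous, f(0) ≤ H₀, and H₀ ≤ min{1/(24C²), 1} with C ≥ 1, then f(t) ≤ 1/(2C) for all t ≥ 0. -/
/-!
Continuity argument. For `x = 1 / (2C)` the right-hand side `C (H₀ + H₀² + H₀^{5/2}) + C (1 + H₀⁵) x²`
is at most `3 C H₀ + (1 + H₀) / (4C) ≤ 1 / (8C) + (25/24) / (4C) < x`, using `24 C² H₀ ≤ 1` and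
`H₀ ≤ 1/24`. So `f` never takes the value `1 / (2C)`; it starts below it and `[0, ∞)` is
connected, hence it stays below it.
-/

open Set

theorem IsPreconnected.lt_of_forall_ne {X α : Type*} [TopologicalSpace X] [LinearOrder α]
    [TopologicalSpace α] [OrderClosedTopology α] {s : Set X} (hs : IsPreconnected s)
    {f : X → α} (hf : ContinuousOn f s) {a : X} (ha : a ∈ s) {c : α} (hfa : f a < c)
    (hne : ∀ x ∈ s, f x ≠ c) {x : X} (hx : x ∈ s) : f x < c := by
  by_contra! hcx
  obtain ⟨y, hy, hfy⟩ := hs.intermediate_value ha hx hf ⟨hfa.le, hcx⟩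
  exact hne y hy hfy

theorem add_sq_add_rpow_le_three_mul {H : ℝ} (h₀ : 0 ≤ H) (h₁ : H ≤ 1) :
    H + H ^ 2 + H ^ (5 / 2 : ℝ) ≤ 3 * H := by
  have hsq : H ^ 2 ≤ H := by nlinarith
  have hrpow : H ^ (5 / 2 : ℝ) ≤ H := by
    simpa using Real.rpow_le_rpow_of_exponent_ge' h₀ h₁ zero_le_one (by norm_num : (1 : ℝ) ≤ 5 / 2)
  linarith

theorem bootstrap_rhs_lt_inv_two_mul {C H : ℝ} (hC : 1 ≤ C) (h₀ : 0 ≤ H) (h₁ : H ≤ 1)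
    (hsmall : 24 * C ^ 2 * H ≤ 1) :
    C * (H + H ^ 2 + H ^ (5 / 2 : ℝ) + (1 + H ^ 5) * (1 / (2 * C)) ^ 2) < 1 / (2 * C) := by
  have hC₀ : 0 < C := one_pos.trans_le hC
  have hlin := add_sq_add_rpow_le_three_mul h₀ h₁
  have h₅ : H ^ 5 ≤ H := pow_le_of_le_one h₀ h₁ (by norm_num)
  have hH : 24 * H ≤ 1 := by nlinarith [mul_le_mul_of_nonneg_right (one_le_pow₀ (n := 2) hC) h₀]
  rw [← sub_pos]
  field_simp
  nlinarith

theorem bootstrap_global_bound_general (f : ℝ → ℝ) (C H0 : ℝ) (hC : 1 ≤ C) (hH0 : 0 ≤ H0)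
    (hineq : ∀ t, 0 ≤ t →
      f t ≤ C * (H0 + H0 ^ 2 + H0 ^ (5 / 2 : ℝ) + (1 + H0 ^ 5) * (f t) ^ 2))
    (hcont : ContinuousOn f (Set.Ici 0))
    (hf0 : f 0 ≤ H0)
    (hsmall : H0 ≤ min (1 / (24 * C ^ 2)) 1) :
    ∀ t, 0 ≤ t → f t ≤ 1 / (2 * C) := by
  have hC₀ : 0 < C := one_pos.trans_le hC
  have hH1 : H0 ≤ 1 := hsmall.trans (min_le_right _ _)
  have hH24 : 24 * C ^ 2 * H0 ≤ 1 := by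
    have := hsmall.trans (min_le_left _ _)
    rwa [le_div_iff₀ (by positivity), mul_comm] at this
  have hstart : f 0 < 1 / (2 * C) := by
    refine hf0.trans_lt ?_
    rw [lt_div_iff₀ (by positivity)]
    nlinarith
  have hgap : ∀ t ∈ Ici (0 : ℝ), f t ≠ 1 / (2 * C) := fun t ht hft =>
    (bootstrap_rhs_lt_inv_two_mul hC hH0 hH1 hH24).not_ge (hft ▸ hineq t ht)
  exact fun t ht =>
    (isPreconnected_Ici.lt_of_forall_ne hcont self_mem_Ici hstart hgap ht).le

theorem bootstrap_global_bound (f : ℝ → ℝ) (C H0 : ℝ) (hC : 1 ≤ C) (hH0 : 0 ≤ H0)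
    (hnonneg : ∀ t, 0 ≤ t → 0 ≤ f t)
    (hineq : ∀ t, 0 ≤ t →
      f t ≤ C * (H0 + H0 ^ 2 + H0 ^ (5 / 2 : ℝ) + (1 + H0 ^ 5) * (f t) ^ 2))
    (hcont : ContinuousOn f (Set.Ici 0))
    (hf0 : f 0 ≤ H0)
    (hsmall : H0 ≤ min (1 / (24 * C ^ 2)) 1) :
    ∀ t, 0 ≤ t → f t ≤ 1 / (2 * C) :=
  bootstrap_global_bound_general f C H0 hC hH0 hineq hcont hf0 hsmall
end
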